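/- arXiv:math/0305213 — 2 statements merged into one kernel-verified Lean document; each statement's English description precedes it below -/
import Mathlib

section
/- If a consistent, computably axiomatized formal theory proves only true statements of the form 'C(x) ≥ m', then there is a constant N (depending on the theory) such that the theory proves no statement 'C(x) ≥ m' with m > N, even though such true statements exist for every m. -/
/-!
Berry's paradox, made effective. Enumerate the theorems `C(x) ≥ m` of the theory and let the
machine `g` on input `p` output the first `x` whose enumerated bound satisfies `m ≥ 2 |p|`.
The universal machine simulates `g`, so `C(x) ≤ |p| + c`; by soundness `2 |p| ≤ C(x)`. Hence
`|p| ≤ c` for every `p` on which `g` halts, and if a bound `m > 2c + 1` were provable, `g` would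
halt on every `p` of length `c + 1`.
-/

section Search

variable {α : Type*}

def searchAbove (f : ℕ → Option (α × ℕ)) (n : ℕ) : Part α :=
  Nat.rfindOpt fun k => (f k).bind fun xm => if n ≤ xm.2 then some xm.1 else none

theorem Partrec.searchAbove [Primcodable α] {f : ℕ → Option (α × ℕ)} (hf : Computable f) :
    Partrec (searchAbove f) := by
  have hfilter : Primrec₂ fun (n : ℕ) (xm : α × ℕ) =>
      if n ≤ xm.2 then Option.some xm.1 else Option.none :=
    Primrec.ite (Primrec.nat_le.comp Primrec.fst (Primrec.snd.comp Primrec.snd))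
      (Primrec.option_some.comp (Primrec.fst.comp Primrec.snd)) (Primrec.const Option.none)
  exact Partrec.rfindOpt (Computable.option_bind (hf.comp Computable.snd)
    (hfilter.to_comp.comp (Computable.fst.comp Computable.fst) Computable.snd))

variable {f : ℕ → Option (α × ℕ)} {n : ℕ} {x : α}

theorem exists_of_mem_searchAbove (h : x ∈ searchAbove f n) :
    ∃ k m, f k = some (x, m) ∧ n ≤ m := by
  obtain ⟨k, hk⟩ := Nat.rfindOpt_spec h
  simp only [Option.mem_def, Option.bind_eq_some_iff, Option.ite_none_right_eq_some,
    Option.some.injEq] at hk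
  obtain ⟨⟨x', m⟩, hfk, hm, rfl⟩ := hk
  exact ⟨k, m, hfk, hm⟩

theorem searchAbove_dom {k m : ℕ} (hk : f k = some (x, m)) (hm : n ≤ m) :
    (searchAbove f n).Dom :=
  Nat.rfindOpt_dom.2 ⟨k, x, by simp [hk, hm]⟩

end Search

theorem chaitin_incompleteness_general
    (U : List Bool →. List Bool)
    (huniv : ∀ g : List Bool →. List Bool, Partrec g →
      ∃ c : ℕ, ∀ p x, x ∈ g p → ∃ q : List Bool, x ∈ U q ∧ q.length ≤ p.length + c)
    (Provable : List Bool → ℕ → Prop)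
    (hsound : ∀ x m, Provable x m → ∀ p : List Bool, x ∈ U p → m ≤ p.length)
    (hce : ∃ f : ℕ → Option (List Bool × ℕ), Computable f ∧
      ∀ x m, (Provable x m ↔ ∃ k, f k = some (x, m))) :
    ∃ N : ℕ, ∀ x m, Provable x m → m ≤ N := by
  obtain ⟨f, hf, hfP⟩ := hce
  obtain ⟨c, hc⟩ := huniv (fun p => searchAbove f (2 * p.length))
    ((Partrec.searchAbove hf).comp
      (Primrec.nat_mul.comp (Primrec.const 2) Primrec.list_length).to_comp)
  refine ⟨2 * c + 1, fun x m hxm => ?_⟩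
  by_contra! hm
  set p := List.replicate (c + 1) true
  obtain ⟨k, hk⟩ := (hfP x m).1 hxm
  have hp : 2 * p.length ≤ m := by simp only [p, List.length_replicate]; omega
  obtain ⟨y, hy⟩ := Part.dom_iff_mem.1 (searchAbove_dom hk hp)
  obtain ⟨k', m', hk', hm'⟩ := exists_of_mem_searchAbove hy
  obtain ⟨q, hUq, hq⟩ := hc p y hy
  have hmq := hsound y m' ((hfP y m').2 ⟨k', hk'⟩) q hUq
  simp only [p, List.length_replicate] at hm' hq
  omega

/-- Chaitin's information-theoretic incompleteness theorem.  Let `U` be a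
universal machine (every partial computable function is simulated by `U` with
constant overhead), and let `Provable x m` express that a fixed formal theory
proves the statement `C(x) ≥ m`.  If the theory is sound for such statements
(whatever it proves is true for `U`-complexity) and its theorems are
computably enumerable, then there is a constant `N` such that no statement
`C(x) ≥ m` with `m > N` is provable. -/
theorem chaitin_incompleteness
    (U : List Bool →. List Bool) (hU : Partrec U)
    (huniv : ∀ g : List Bool →. List Bool, Partrec g →
      ∃ c : ℕ, ∀ p x, x ∈ g p → ∃ q : List Bool, x ∈ U q ∧ q.length ≤ p.length + c)
    (Provable : List Bool → ℕ → Prop)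
    (hsound : ∀ x m, Provable x m → ∀ p : List Bool, x ∈ U p → m ≤ p.length)
    (hce : ∃ f : ℕ → Option (List Bool × ℕ), Computable f ∧
      ∀ x m, (Provable x m ↔ ∃ k, f k = some (x, m))) :
    ∃ N : ℕ, ∀ x m, Provable x m → m ≤ N :=
  chaitin_incompleteness_general U huniv Provable hsound hce
end

section
/- Kraft's inequality: if D is a prefix-free set of finite binary strings, then ∑_{p ∈ D} 2^{-|p|} ≤ 1. -/
/-!
Fix `n` at least the length of every word of a finite prefix-free set `S` over an alphabet of
size `k`. Each `p ∈ S` has `k ^ (n - |p|)` extensions of length `n`, and the extensions of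
distinct words of `S` are disjoint, since two prefixes of one word are comparable. Counting
words of length `n` gives `∑ p ∈ S, k ^ (n - |p|) ≤ k ^ n`; dividing by `k ^ n` is Kraft's
inequality for `S`, and the infinite sum is the supremum of these finite ones.
-/

/-- A set of binary strings is prefix-free if no element is a proper prefix
of another. -/
def PrefixFree (D : Set (List Bool)) : Prop :=
  ∀ p ∈ D, ∀ q ∈ D, p <+: q → p = q

open Finset

namespace List

def wordsOfLength (α : Type*) [Fintype α] (n : ℕ) : Finset (List α) :=
  (univ : Finset (List.Vector α n)).map ⟨List.Vector.toList, List.Vector.toList_injective⟩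

variable {α : Type*} [Fintype α]

@[simp]
theorem mem_wordsOfLength {n : ℕ} {q : List α} : q ∈ wordsOfLength α n ↔ q.length = n := by
  simp only [wordsOfLength, Finset.mem_map, mem_univ, true_and, Function.Embedding.coeFn_mk]
  exact ⟨fun ⟨v, hv⟩ => hv ▸ v.toList_length, fun hq => ⟨⟨q, hq⟩, rfl⟩⟩

theorem card_wordsOfLength (n : ℕ) : #(wordsOfLength α n) = Fintype.card α ^ n := by
  simp [wordsOfLength, card_vector]

def extensionsOfLength (n : ℕ) (p : List α) : Finset (List α) :=
  (wordsOfLength α (n - p.length)).map ⟨(p ++ ·), append_right_injective p⟩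

theorem card_extensionsOfLength (n : ℕ) (p : List α) :
    #(extensionsOfLength n p) = Fintype.card α ^ (n - p.length) := by
  rw [extensionsOfLength, card_map, card_wordsOfLength]

theorem IsPrefix.of_mem_extensionsOfLength {n : ℕ} {p q : List α}
    (hq : q ∈ extensionsOfLength n p) : p <+: q := by
  obtain ⟨r, -, rfl⟩ := Finset.mem_map.mp hq
  exact prefix_append p r

theorem extensionsOfLength_subset_wordsOfLength {n : ℕ} {p : List α} (hp : p.length ≤ n) :
    extensionsOfLength n p ⊆ wordsOfLength α n := by
  intro q hq
  obtain ⟨r, hr, rfl⟩ := Finset.mem_map.mp hq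
  rw [mem_wordsOfLength] at hr ⊢
  simp only [Function.Embedding.coeFn_mk, length_append, hr]
  omega

theorem pairwiseDisjoint_extensionsOfLength {S : Set (List α)}
    (hS : ∀ p ∈ S, ∀ q ∈ S, p <+: q → p = q) (n : ℕ) :
    S.PairwiseDisjoint (extensionsOfLength n) := by
  intro p hp p' hp' hne
  refine Finset.disjoint_left.mpr fun q hq hq' => hne ?_
  have hpq := IsPrefix.of_mem_extensionsOfLength hq
  have hp'q := IsPrefix.of_mem_extensionsOfLength hq'
  rcases le_total p.length p'.length with hle | hle
  · exact hS p hp p' hp' (prefix_of_prefix_length_le hpq hp'q hle)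
  · exact (hS p' hp' p hp (prefix_of_prefix_length_le hp'q hpq hle)).symm

theorem sum_card_pow_sub_length_le {D : Set (List α)}
    (hD : ∀ p ∈ D, ∀ q ∈ D, p <+: q → p = q) {S : Finset (List α)} (hS : ↑S ⊆ D) {n : ℕ}
    (hn : ∀ p ∈ S, p.length ≤ n) :
    ∑ p ∈ S, Fintype.card α ^ (n - p.length) ≤ Fintype.card α ^ n := by
  classical
  calc ∑ p ∈ S, Fintype.card α ^ (n - p.length) = #(S.biUnion (extensionsOfLength n)) := by
        rw [card_biUnion ((pairwiseDisjoint_extensionsOfLength hD n).subset hS)]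
        simp only [card_extensionsOfLength]
    _ ≤ #(wordsOfLength α n) := card_le_card <|
        biUnion_subset.mpr fun p hp => extensionsOfLength_subset_wordsOfLength (hn p hp)
    _ = Fintype.card α ^ n := card_wordsOfLength n

theorem sum_inv_card_pow_length_le_one [Nonempty α] {D : Set (List α)}
    (hD : ∀ p ∈ D, ∀ q ∈ D, p <+: q → p = q) {S : Finset (List α)} (hS : ↑S ⊆ D) :
    ∑ p ∈ S, ((Fintype.card α : ℝ) ^ p.length)⁻¹ ≤ 1 := by
  set n := S.sup length
  have hn : ∀ p ∈ S, p.length ≤ n := fun p hp => le_sup hp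
  have hk : (0 : ℝ) < Fintype.card α := by exact_mod_cast Fintype.card_pos
  have hcount : ∑ p ∈ S, (Fintype.card α : ℝ) ^ (n - p.length) ≤ (Fintype.card α : ℝ) ^ n := by
    exact_mod_cast sum_card_pow_sub_length_le hD hS hn
  calc ∑ p ∈ S, ((Fintype.card α : ℝ) ^ p.length)⁻¹
      = (∑ p ∈ S, (Fintype.card α : ℝ) ^ (n - p.length)) / (Fintype.card α : ℝ) ^ n := by
        rw [sum_div]
        refine sum_congr rfl fun p hp => ?_
        rw [pow_sub₀ _ hk.ne' (hn p hp)]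
        field_simp
    _ ≤ 1 := div_le_one_of_le₀ hcount (pow_pos hk n).le

end List

/-- Kraft's inequality: if `D` is a prefix-free set of finite binary strings,
then `∑_{p ∈ D} 2^{-|p|} ≤ 1`. -/
theorem kraft_inequality (D : Set (List Bool)) (hD : PrefixFree D) :
    ∑' p : D, ((2 : ℝ) ^ (p : List Bool).length)⁻¹ ≤ 1 := by
  refine Real.tsum_le_of_sum_le (fun _ => by positivity) fun s => ?_
  have hs : ↑(s.map (Function.Embedding.subtype (· ∈ D))) ⊆ D := by
    rw [coe_map, Set.image_subset_iff]
    exact fun p _ => p.2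
  simpa [sum_map] using List.sum_inv_card_pow_length_le_one hD hs
end
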